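/- arXiv:1911.01516 — 4 statements merged into one kernel-verified Lean document; each statement's English description precedes it below -/
import Mathlib

section
/- Let D and D' be two dictionaries over the same event alphabet, both satisfying Condition A2. Then O(D) = O(D') if and only if D = D'. -/
/-- A separation of a sentence `E` with respect to a dictionary `D` is a list `S` of
pairwise distinct patterns, each belonging to `D`, whose concatenation equals `E`. -/
def IsSeparation {𝓔 : Type*} (D : Finset (List 𝓔)) (S : List (List 𝓔)) (E : List 𝓔) : Prop :=
  S.Nodup ∧ (∀ w ∈ S, w ∈ D) ∧ S.flatten = E

/-- The set of sentences generated by a dictionary `D`: those admitting at least one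
separation with respect to `D`. -/
def genSet {𝓔 : Type*} (D : Finset (List 𝓔)) : Set (List 𝓔) :=
  {E | ∃ S, IsSeparation D S E}

/-- Condition A2: every pattern in the dictionary of length at least 2 has pairwise
distinct entries. -/
def CondA2 {𝓔 : Type*} (D : Finset (List 𝓔)) : Prop :=
  ∀ w ∈ D, 2 ≤ w.length → w.Nodup

/-! Induct on pattern length: suppose `D` and `D'` agree on patterns shorter than `τ ∈ D`, and
restrict both to the alphabet `T` of `τ`. By A2 all surviving patterns have distinct letters,
hence length at most `|T| = |τ|`, so a surviving pattern of one dictionary that is a proper prefix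
of a surviving pattern of the other is shorter than `τ` and survives in both. A separation uses
each pattern at most once, so `O(D) = O(D')` forces the restrictions to have the same total length
and then the same concatenations of all their patterns. Order the letters linearly and read the
lexicographically least such concatenation in both restrictions. If its first pattern `u` on one
side were a proper prefix of its first pattern `u ++ t` on the other, moving `u` to the front on
the second side and rotating it to the back on the first would force the first letters of `u` and
`t` to coincide, contradicting A2 for `u ++ t`. So the first patterns agree; strip them and repeat.
-/

open scoped List

section Lex

variable {α : Type*} [LinearOrder α]

theorem List.le_of_append_le_append_left {l₁ l₂ l₃ : List α} (h : l₁ ++ l₂ ≤ l₁ ++ l₃) :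
    l₂ ≤ l₃ :=
  not_lt.1 fun h' => not_lt.2 h (List.append_left_lt h')

theorem List.head_le_head_of_cons_le_cons {a b : α} {l₁ l₂ : List α} (h : a :: l₁ ≤ b :: l₂) :
    a ≤ b :=
  not_lt.1 fun hba => not_lt.2 h (List.Lex.rel hba)

end Lex

theorem Finset.perm_toList_cons_iff {α : Type*} [DecidableEq α] {A : Finset α} {a : α}
    (ha : a ∈ A) {l : List α} : (a :: l) ~ A.toList ↔ l ~ (A.erase a).toList := by
  have h : A.toList ~ a :: (A.erase a).toList := by
    conv_lhs => rw [← Finset.insert_erase ha]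
    exact Finset.toList_insert (Finset.notMem_erase a A)
  rw [List.perm_comm, h.congr_left, List.perm_cons, List.perm_comm]

namespace ThemeDictionary

variable {α : Type*}

def concats (A : Finset (List α)) : Set (List α) :=
  {X | ∃ l, l ~ A.toList ∧ l.flatten = X}

theorem flatten_mem_concats {A : Finset (List α)} {l : List (List α)} (hl : l ~ A.toList) :
    l.flatten ∈ concats A :=
  ⟨l, hl, rfl⟩

theorem eq_nil_of_mem_concats_empty {X : List α} (hX : X ∈ concats ∅) : X = [] := by
  obtain ⟨l, hl, rfl⟩ := hX
  rw [Finset.toList_empty, List.perm_nil] at hl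
  rw [hl, List.flatten_nil]

theorem eq_empty_of_nil_mem_concats {A : Finset (List α)} (hA : ∀ w ∈ A, w ≠ [])
    (h : [] ∈ concats A) : A = ∅ := by
  obtain ⟨l, hl, hfl⟩ := h
  refine Finset.eq_empty_of_forall_notMem fun w hw => hA w hw ?_
  exact List.flatten_eq_nil_iff.1 hfl w (hl.mem_iff.2 (Finset.mem_toList.2 hw))

theorem mem_genSet_of_mem_concats {D A : Finset (List α)} (hAD : A ⊆ D) {X : List α}
    (hX : X ∈ concats A) : X ∈ genSet D := by
  obtain ⟨l, hl, rfl⟩ := hX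
  exact ⟨l, hl.nodup_iff.2 A.nodup_toList, fun w hw => hAD (Finset.mem_toList.1 (hl.subset hw)),
    rfl⟩

def totalLength (A : Finset (List α)) : ℕ :=
  ∑ w ∈ A, w.length

theorem length_eq_totalLength_of_mem_concats {A : Finset (List α)} {X : List α}
    (hX : X ∈ concats A) : X.length = totalLength A := by
  obtain ⟨l, hl, rfl⟩ := hX
  rw [totalLength, ← Finset.sum_map_toList, ← (hl.map List.length).sum_eq, List.length_flatten]

theorem exists_isLeast_concats [LinearOrder α] (A : Finset (List α)) :
    ∃ X, IsLeast (concats A) X := by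
  have hfin : {l | l ~ A.toList}.Finite :=
    A.toList.permutations.finite_toSet.subset fun l hl => List.mem_permutations.2 hl
  obtain ⟨l, hl, hmin⟩ := Set.exists_min_image _ List.flatten hfin ⟨A.toList, List.Perm.refl _⟩
  exact ⟨l.flatten, ⟨l, hl, rfl⟩, by rintro _ ⟨m, hm, rfl⟩; exact hmin m hm⟩

def AbsorbsPrefixesOf (B A : Finset (List α)) : Prop :=
  ∀ u ∈ A, ∀ v ∈ B, u <+: v → u ≠ v → u ∈ B

theorem AbsorbsPrefixesOf.erase [DecidableEq α] {A B : Finset (List α)}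
    (h : AbsorbsPrefixesOf B A) (w : List α) : AbsorbsPrefixesOf (B.erase w) (A.erase w) :=
  fun u hu v hv huv hne => Finset.mem_erase.2 ⟨Finset.ne_of_mem_erase hu,
    h u (Finset.mem_of_mem_erase hu) v (Finset.mem_of_mem_erase hv) huv hne⟩

section LeastConcat

variable [LinearOrder α] {A B : Finset (List α)} {X : List α}

theorem isLeast_concats_erase {u : List α} {l : List (List α)} (hl : (u :: l) ~ A.toList)
    (hX : IsLeast (concats A) (u ++ l.flatten)) : IsLeast (concats (A.erase u)) l.flatten := by
  have hu : u ∈ A := Finset.mem_toList.1 (hl.subset List.mem_cons_self)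
  refine ⟨flatten_mem_concats ((Finset.perm_toList_cons_iff hu).1 hl), ?_⟩
  rintro _ ⟨m, hm, rfl⟩
  exact List.le_of_append_le_append_left
    (hX.2 (flatten_mem_concats ((Finset.perm_toList_cons_iff hu).2 hm)))

theorem eq_of_isPrefix_of_isLeast_concats (hA : IsLeast (concats A) X)
    (hB : IsLeast (concats B) X) (hAne : ∀ w ∈ A, w ≠ []) (hBnd : ∀ w ∈ B, w.Nodup)
    {u v : List α} {l r : List (List α)} (hl : (u :: l) ~ A.toList) (hr : (v :: r) ~ B.toList)
    (hXu : u ++ l.flatten = X) (hXv : v ++ r.flatten = X)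
    (hAB : AbsorbsPrefixesOf B A) (huv : u <+: v) : u = v := by
  by_contra hne
  have huA : u ∈ A := Finset.mem_toList.1 (hl.subset List.mem_cons_self)
  have hvB : v ∈ B := Finset.mem_toList.1 (hr.subset List.mem_cons_self)
  have hur : u ∈ r := by
    have := hr.symm.subset (Finset.mem_toList.2 (hAB u huA v hvB huv hne))
    exact (List.mem_cons.1 this).resolve_left hne
  obtain ⟨t, rfl⟩ := huv
  obtain ⟨a, u', rfl⟩ := List.exists_cons_of_ne_nil (hAne _ huA)
  obtain ⟨b, t', rfl⟩ : ∃ b t', t = b :: t' :=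
    List.exists_cons_of_ne_nil fun ht => hne (by rw [ht, List.append_nil])
  have hab_ne : a ≠ b := by
    have := hBnd _ hvB
    exact (List.nodup_append.1 this).2.2 a List.mem_cons_self b List.mem_cons_self
  have hlr : l.flatten = (b :: t') ++ r.flatten :=
    List.append_cancel_left (hXu.trans (hXv.symm.trans (List.append_assoc _ _ _)))
  have hba : b ≤ a := by
    have hperm : (a :: u') :: (a :: u' ++ b :: t') :: r.erase (a :: u') ~ B.toList :=
      ((List.Perm.swap _ _ _).trans (((List.perm_cons_erase hur).symm).cons _)).trans hr
    have := hB.2 (flatten_mem_concats hperm)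
    rw [← hXv, List.append_assoc, List.flatten_cons, List.flatten_cons] at this
    exact List.head_le_head_of_cons_le_cons (List.le_of_append_le_append_left this)
  have hab : a ≤ b := by
    have hperm : l ++ [a :: u'] ~ A.toList := (List.perm_append_singleton _ _).trans hl
    have := hA.2 (flatten_mem_concats hperm)
    rw [← hXu, List.flatten_append, hlr, List.flatten_singleton] at this
    exact List.head_le_head_of_cons_le_cons this
  exact hab_ne (le_antisymm hab hba)

theorem eq_of_isLeast_concats (hAne : ∀ w ∈ A, w ≠ []) (hBne : ∀ w ∈ B, w ≠ [])
    (hAnd : ∀ w ∈ A, w.Nodup) (hBnd : ∀ w ∈ B, w.Nodup)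
    (hAB : AbsorbsPrefixesOf B A) (hBA : AbsorbsPrefixesOf A B)
    (hA : IsLeast (concats A) X) (hB : IsLeast (concats B) X) : A = B := by
  induction hn : A.card generalizing A B X with
  | zero =>
    rw [Finset.card_eq_zero] at hn
    subst hn
    rw [eq_nil_of_mem_concats_empty hA.1] at hB
    exact (eq_empty_of_nil_mem_concats hBne hB.1).symm
  | succ n ih =>
    obtain ⟨_ | ⟨u, l⟩, hl, hXu⟩ := hA.1
    · simpa [hn] using hl.length_eq
    rw [List.flatten_cons] at hXu
    have hu : u ∈ A := Finset.mem_toList.1 (hl.subset List.mem_cons_self)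
    obtain ⟨_ | ⟨v, r⟩, hr, hXv⟩ := hB.1
    · exact (hAne u hu (List.append_eq_nil_iff.1 (hXu.trans hXv.symm)).1).elim
    rw [List.flatten_cons] at hXv
    have huv : u = v := by
      rcases le_total u.length v.length with h | h
      · exact eq_of_isPrefix_of_isLeast_concats hA hB hAne hBnd hl hr hXu hXv hAB
          (List.prefix_of_prefix_length_le ⟨_, hXu⟩ ⟨_, hXv⟩ h)
      · exact (eq_of_isPrefix_of_isLeast_concats hB hA hBne hAnd hr hl hXv hXu hBA
          (List.prefix_of_prefix_length_le ⟨_, hXv⟩ ⟨_, hXu⟩ h)).symm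
    subst huv
    have hlr : l.flatten = r.flatten := List.append_cancel_left (hXu.trans hXv.symm)
    have hrest : A.erase u = B.erase u := by
      refine ih (fun w hw => hAne w (Finset.mem_of_mem_erase hw))
        (fun w hw => hBne w (Finset.mem_of_mem_erase hw))
        (fun w hw => hAnd w (Finset.mem_of_mem_erase hw))
        (fun w hw => hBnd w (Finset.mem_of_mem_erase hw)) (hAB.erase u) (hBA.erase u)
        (isLeast_concats_erase hl (hXu ▸ hA)) ?_ ?_
      · rw [hlr]
        exact isLeast_concats_erase hr (hXv ▸ hB)
      · rw [Finset.card_erase_of_mem hu, hn, Nat.add_sub_cancel]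
    rw [← Finset.insert_erase hu, hrest,
      Finset.insert_erase (Finset.mem_toList.1 (hr.subset List.mem_cons_self))]

end LeastConcat

section Capacity

variable [DecidableEq α]

def overAlphabet (D : Finset (List α)) (T : Finset α) : Finset (List α) :=
  {w ∈ D | w.toFinset ⊆ T}

theorem mem_overAlphabet {D : Finset (List α)} {T : Finset α} {w : List α} :
    w ∈ overAlphabet D T ↔ w ∈ D ∧ w.toFinset ⊆ T :=
  Finset.mem_filter

theorem _root_.IsSeparation.mem_concats {D : Finset (List α)} {S : List (List α)} {E : List α}
    (hS : IsSeparation D S E) : E ∈ concats S.toFinset :=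
  ⟨S, (List.toFinset_toList hS.1).symm, hS.2.2⟩

theorem toFinset_subset_of_mem_concats_overAlphabet {D : Finset (List α)} {T : Finset α}
    {X : List α} (hX : X ∈ concats (overAlphabet D T)) : X.toFinset ⊆ T := by
  obtain ⟨l, hl, rfl⟩ := hX
  intro x hx
  obtain ⟨w, hw, hxw⟩ := List.mem_flatten.1 (List.mem_toFinset.1 hx)
  exact (mem_overAlphabet.1 (Finset.mem_toList.1 (hl.subset hw))).2 (List.mem_toFinset.2 hxw)

theorem _root_.IsSeparation.toFinset_subset_overAlphabet {D : Finset (List α)} {S : List (List α)}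
    {E : List α} {T : Finset α} (hS : IsSeparation D S E) (hE : E.toFinset ⊆ T) :
    S.toFinset ⊆ overAlphabet D T := by
  intro w hw
  have hwS := List.mem_toFinset.1 hw
  refine mem_overAlphabet.2 ⟨hS.2.1 w hwS, fun x hx => hE ?_⟩
  rw [← hS.2.2]
  exact List.mem_toFinset.2 (List.mem_flatten.2 ⟨w, hwS, List.mem_toFinset.1 hx⟩)

theorem length_le_totalLength_overAlphabet {D' : Finset (List α)} {T : Finset α} {X : List α}
    (hX : X ∈ genSet D') (hXT : X.toFinset ⊆ T) :
    X.length ≤ totalLength (overAlphabet D' T) := by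
  obtain ⟨S, hS⟩ := hX
  rw [length_eq_totalLength_of_mem_concats hS.mem_concats]
  exact Finset.sum_le_sum_of_subset (hS.toFinset_subset_overAlphabet hXT)

theorem totalLength_overAlphabet_mono {D D' : Finset (List α)} (h : genSet D ⊆ genSet D')
    (T : Finset α) : totalLength (overAlphabet D T) ≤ totalLength (overAlphabet D' T) := by
  have hX : (overAlphabet D T).toList.flatten ∈ concats (overAlphabet D T) :=
    flatten_mem_concats (List.Perm.refl _)
  rw [← length_eq_totalLength_of_mem_concats hX]
  exact length_le_totalLength_overAlphabet
    (h (mem_genSet_of_mem_concats (Finset.filter_subset _ _) hX))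
    (toFinset_subset_of_mem_concats_overAlphabet hX)

theorem mem_concats_overAlphabet {D' : Finset (List α)} {T : Finset α} {X : List α}
    (hD' : ∀ w ∈ D', w ≠ []) (hX : X ∈ genSet D') (hXT : X.toFinset ⊆ T)
    (hlen : totalLength (overAlphabet D' T) ≤ X.length) : X ∈ concats (overAlphabet D' T) := by
  obtain ⟨S, hS⟩ := hX
  have hsub := hS.toFinset_subset_overAlphabet hXT
  suffices S.toFinset = overAlphabet D' T from this ▸ hS.mem_concats
  by_contra hne
  obtain ⟨w, hw, hwS⟩ := Finset.exists_of_ssubset (Finset.ssubset_iff_subset_ne.2 ⟨hsub, hne⟩)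
  have hlt : totalLength S.toFinset < totalLength (overAlphabet D' T) :=
    Finset.sum_lt_sum_of_subset hsub hw hwS
      (List.length_pos_iff.2 (hD' w (mem_overAlphabet.1 hw).1)) fun _ _ _ => Nat.zero_le _
  rw [← length_eq_totalLength_of_mem_concats hS.mem_concats] at hlt
  omega

theorem concats_overAlphabet_subset {D D' : Finset (List α)} (hD' : ∀ w ∈ D', w ≠ [])
    (h : genSet D ⊆ genSet D') {T : Finset α}
    (hlen : totalLength (overAlphabet D' T) ≤ totalLength (overAlphabet D T)) :
    concats (overAlphabet D T) ⊆ concats (overAlphabet D' T) := fun _ hX =>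
  mem_concats_overAlphabet hD' (h (mem_genSet_of_mem_concats (Finset.filter_subset _ _) hX))
    (toFinset_subset_of_mem_concats_overAlphabet hX)
    (length_eq_totalLength_of_mem_concats hX ▸ hlen)

theorem concats_overAlphabet_eq {D D' : Finset (List α)} (hD : ∀ w ∈ D, w ≠ [])
    (hD' : ∀ w ∈ D', w ≠ []) (h : genSet D = genSet D') (T : Finset α) :
    concats (overAlphabet D T) = concats (overAlphabet D' T) := by
  have hlen := le_antisymm (totalLength_overAlphabet_mono h.le T)
    (totalLength_overAlphabet_mono h.ge T)
  exact (concats_overAlphabet_subset hD' h.le hlen.ge).antisymm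
    (concats_overAlphabet_subset hD h.ge hlen.le)

end Capacity

theorem _root_.CondA2.nodup {D : Finset (List α)} (hD : CondA2 D) {w : List α} (hw : w ∈ D) :
    w.Nodup := by
  rcases le_or_gt 2 w.length with h | h
  · exact hD w hw h
  · match w, h with
    | [], _ => exact List.nodup_nil
    | [a], _ => exact List.nodup_singleton a

section PrefixAbsorption

variable [DecidableEq α]

theorem length_le_card_of_mem_overAlphabet {D : Finset (List α)} (hD : CondA2 D) {T : Finset α}
    {w : List α} (hw : w ∈ overAlphabet D T) : w.length ≤ T.card := by
  obtain ⟨hwD, hwT⟩ := mem_overAlphabet.1 hw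
  rw [← List.toFinset_card_of_nodup (hD.nodup hwD)]
  exact Finset.card_le_card hwT

theorem absorbsPrefixesOf_overAlphabet {D D' : Finset (List α)} {T : Finset α} {k : ℕ}
    (hbelow : ∀ w : List α, w.length < k → w ∈ D → w ∈ D')
    (hlen : ∀ v ∈ overAlphabet D' T, v.length ≤ k) :
    AbsorbsPrefixesOf (overAlphabet D' T) (overAlphabet D T) := by
  intro u hu v hv huv hne
  obtain ⟨huD, -⟩ := mem_overAlphabet.1 hu
  have hlt : u.length < v.length :=
    huv.length_le.lt_of_ne fun h => hne (huv.eq_of_length h)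
  refine mem_overAlphabet.2 ⟨hbelow u (hlt.trans_le (hlen v hv)) huD, ?_⟩
  exact (Multiset.toFinset_subset.2 huv.subset).trans (mem_overAlphabet.1 hv).2

end PrefixAbsorption

theorem mem_of_mem_of_forall_length_lt [LinearOrder α] {D D' : Finset (List α)}
    (hD : ∀ w ∈ D, w ≠ []) (hD' : ∀ w ∈ D', w ≠ []) (hA2 : CondA2 D) (hA2' : CondA2 D')
    (hO : genSet D = genSet D') {τ : List α}
    (hbelow : ∀ w : List α, w.length < τ.length → (w ∈ D ↔ w ∈ D')) (hτ : τ ∈ D) : τ ∈ D' := by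
  have hT : τ.toFinset.card = τ.length := List.toFinset_card_of_nodup (hA2.nodup hτ)
  set A := overAlphabet D τ.toFinset
  set B := overAlphabet D' τ.toFinset
  have hτA : τ ∈ A := mem_overAlphabet.2 ⟨hτ, subset_rfl⟩
  have hAB : A = B := by
    obtain ⟨X, hX⟩ := exists_isLeast_concats A
    refine eq_of_isLeast_concats (fun w hw => hD w (mem_overAlphabet.1 hw).1)
      (fun w hw => hD' w (mem_overAlphabet.1 hw).1)
      (fun w hw => hA2.nodup (mem_overAlphabet.1 hw).1)
      (fun w hw => hA2'.nodup (mem_overAlphabet.1 hw).1)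
      (absorbsPrefixesOf_overAlphabet (fun w hw => (hbelow w hw).1)
        fun v hv => hT ▸ length_le_card_of_mem_overAlphabet hA2' hv)
      (absorbsPrefixesOf_overAlphabet (fun w hw => (hbelow w hw).2)
        fun v hv => hT ▸ length_le_card_of_mem_overAlphabet hA2 hv)
      hX ?_
    rwa [← concats_overAlphabet_eq hD hD' hO]
  exact (mem_overAlphabet.1 (hAB ▸ hτA)).1

end ThemeDictionary

/-- **Dictionary identifiability for theme dictionary models (one-class case).**
If two dictionaries `D` and `D'` (finite sets of nonempty patterns) both satisfy
Condition A2, then they generate the same sentence set if and only if they are equal. -/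
theorem dictionary_identifiable_of_condA2 {𝓔 : Type*} (D D' : Finset (List 𝓔))
    (hD : ∀ w ∈ D, w ≠ []) (hD' : ∀ w ∈ D', w ≠ [])
    (hA2 : CondA2 D) (hA2' : CondA2 D') :
    genSet D = genSet D' ↔ D = D' := by
  refine ⟨fun hO => ?_, congrArg genSet⟩
  let : LinearOrder 𝓔 := IsWellOrder.linearOrder WellOrderingRel
  ext w
  induction hn : w.length using Nat.strong_induction_on generalizing w with
  | _ n ih =>
    have hbelow : ∀ u : List 𝓔, u.length < w.length → (u ∈ D ↔ u ∈ D') :=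
      fun u hu => ih _ (hn ▸ hu) u rfl
    exact ⟨ThemeDictionary.mem_of_mem_of_forall_length_lt hD hD' hA2 hA2' hO hbelow,
      ThemeDictionary.mem_of_mem_of_forall_length_lt hD' hD hA2' hA2 hO.symm
        fun u hu => (hbelow u hu).symm⟩
end

section
/- Let C be a finite index set of classes and let (D_c)_{c∈C} and (D'_c)_{c∈C} be two families of dictionaries over the same event alphabet. Let D_C = ⋃_{c∈C} D_c and D'_C = ⋃_{c∈C} D'_c denote the union dictionaries, and suppose D_C and D'_C satisfy Condition A2 and both families satisfy Condition A1 (the unprimed family with ambient set O(D_C) and class sets O(D_c), the primed family with ambient set O(D'_C) and class sets O(D'_c)). Then O(D_C) = O(D'_C) if and only if D_C = D'_C. -/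
/-- `maxLenWithout D e` is the maximal length of a sentence generated by `D` containing
no occurrence of the event `e` (as a supremum in `ℕ`; it is attained because separations
are duplicate-free lists of patterns from a finite dictionary). -/
noncomputable def maxLenWithout {𝓔 : Type*} (D : Finset (List 𝓔)) (e : 𝓔) : ℕ :=
  sSup {n | ∃ E ∈ genSet D, e ∉ E ∧ E.length = n}

/-- Condition A1 for a family of class dictionaries `Dc` with ambient dictionaries `amb`:
for every class `c` and event `e`, any sentence in the ambient sentence set of `c` that
contains a contiguous subsentence `E₁ ∈ O(Dc c)` having `maxLenWithout (Dc c) e`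
consecutive entries all different from `e` must itself lie in `O(Dc c)`. -/
def CondA1 {𝓔 : Type*} {C : Type*} (amb : C → Finset (List 𝓔))
    (Dc : C → Finset (List 𝓔)) : Prop :=
  ∀ (c : C) (e : 𝓔) (E : List 𝓔), E ∈ genSet (amb c) →
    (∃ E₁, E₁ <:+: E ∧ E₁ ∈ genSet (Dc c) ∧
      ∃ R, R <:+: E₁ ∧ R.length = maxLenWithout (Dc c) e ∧ e ∉ R) →
    E ∈ genSet (Dc c)

namespace List

variable {α : Type*}

theorem prefix_or_prefix_or_exists_ne : ∀ x y : List α, x <+: y ∨ y <+: x ∨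
    ∃ p a b s t, a ≠ b ∧ x = p ++ a :: s ∧ y = p ++ b :: t
  | [], _ => .inl nil_prefix
  | _ :: _, [] => .inr (.inl nil_prefix)
  | a :: x, b :: y => by
    by_cases hab : a = b
    · subst hab
      rcases prefix_or_prefix_or_exists_ne x y with h | h | ⟨p, c, d, s, t, hcd, rfl, rfl⟩
      · exact .inl (cons_prefix_cons.2 ⟨rfl, h⟩)
      · exact .inr (.inl (cons_prefix_cons.2 ⟨rfl, h⟩))
      · exact .inr (.inr ⟨a :: p, c, d, s, t, hcd, rfl, rfl⟩)
    · exact .inr (.inr ⟨[], a, b, x, y, hab, rfl, rfl⟩)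

theorem eq_of_prefix_of_suffix {u v : List α} (hu : u ≠ []) (hv : v.Nodup)
    (hp : u <+: v) (hs : u <:+ v) : u = v := by
  obtain ⟨s, rfl⟩ := hs
  rcases s with _ | ⟨a, s⟩
  · rfl
  obtain ⟨t, ht⟩ := hp
  have hhead : u.head? = some a := by
    simpa [head?_append, head?_eq_none_iff.not.2 hu] using congrArg head? ht
  obtain ⟨b, u', rfl⟩ := exists_cons_of_ne_nil hu
  simp only [head?_cons, Option.some.injEq] at hhead
  subst hhead
  exact absurd (nodup_append.1 hv).2.2 (by simp)

theorem eq_of_flatten_eq_of_reverse_flatten_eq :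
    ∀ {l l' : List (List α)}, (∀ w ∈ l, w ≠ [] ∧ w.Nodup) → (∀ w ∈ l', w ≠ [] ∧ w.Nodup) →
      l.flatten = l'.flatten → l.reverse.flatten = l'.reverse.flatten → l = l'
  | [], [], _, _, _, _ => rfl
  | [], v :: _, _, hl', hf, _ =>
    absurd (flatten_eq_nil_iff.1 hf.symm v mem_cons_self) (hl' v mem_cons_self).1
  | u :: _, [], hl, _, hf, _ =>
    absurd (flatten_eq_nil_iff.1 hf u mem_cons_self) (hl u mem_cons_self).1
  | u :: l, v :: l', hl, hl', hf, hg => by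
    simp only [flatten_cons, reverse_cons, flatten_append, flatten_nil, append_nil] at hf hg
    have hpre : ∀ {a b s t : List α}, a ++ s = b ++ t → a.length ≤ b.length → a <+: b :=
      fun {_ b _ t} h hle => prefix_of_prefix_length_le (prefix_append _ _)
        (h ▸ prefix_append b t) hle
    have hsuf : ∀ {a b s t : List α}, s ++ a = t ++ b → a.length ≤ b.length → a <:+ b :=
      fun {_ b _ t} h hle => suffix_of_suffix_length_le (suffix_append _ _)
        (h ▸ suffix_append t b) hle
    have huv : u = v := by
      rcases le_total u.length v.length with hle | hle
      · exact eq_of_prefix_of_suffix (hl u mem_cons_self).1 (hl' v mem_cons_self).2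
          (hpre hf hle) (hsuf hg hle)
      · exact (eq_of_prefix_of_suffix (hl' v mem_cons_self).1 (hl u mem_cons_self).2
          (hpre hf.symm hle) (hsuf hg.symm hle)).symm
    subst huv
    rw [eq_of_flatten_eq_of_reverse_flatten_eq (fun w hw => hl w (mem_cons_of_mem u hw))
      (fun w hw => hl' w (mem_cons_of_mem u hw)) (append_cancel_left hf) (append_cancel_right hg)]

section Lex

variable [LinearOrder α]

theorem append_lt_append_left_iff (p : List α) {u v : List α} : p ++ u < p ++ v ↔ u < v := by
  induction p with
  | nil => rfl
  | cons a p ih => simp [ih]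

theorem append_le_append_left_iff (p : List α) {u v : List α} : p ++ u ≤ p ++ v ↔ u ≤ v := by
  simp only [le_iff_lt_or_eq, append_lt_append_left_iff, append_cancel_left_eq]

theorem cons_le_cons_iff_lt_of_ne {a b : α} (u v : List α) (hab : a ≠ b) :
    a :: u ≤ b :: v ↔ a < b := by
  simp [le_iff_lt_or_eq, cons_lt_cons_iff, hab]

theorem append_lt_append_of_lt_of_length_eq {x y : List α} (h : x < y)
    (hxy : x.length = y.length) (s t : List α) : x ++ s < y ++ t := by
  induction h with
  | nil => simp at hxy
  | cons h ih => exact Lex.cons (ih (by simpa using hxy))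
  | rel h => exact Lex.rel h

theorem append_le_append_of_le_of_length_eq {x y : List α} (h : x ≤ y)
    (hxy : x.length = y.length) (s : List α) : x ++ s ≤ y ++ s := by
  rcases h.lt_or_eq with h | rfl
  · exact (append_lt_append_of_lt_of_length_eq h hxy s s).le
  · exact le_rfl

end Lex

def cycleKey (x : List α) : List α := x ++ x.take 1

theorem append_le_append_comm_of_cycleKey_le [LinearOrder α] {x y : List α} (hy : y.Nodup)
    (h : cycleKey x ≤ cycleKey y) : x ++ y ≤ y ++ x := by
  -- In each case both comparisons are decided by the same pair of distinct letters.
  rcases prefix_or_prefix_or_exists_ne x y with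
    ⟨z, rfl⟩ | ⟨z, rfl⟩ | ⟨p, a, b, s, t, hab, rfl, rfl⟩
  · rcases x with _ | ⟨a, x⟩
    · simp
    rcases z with _ | ⟨c, z⟩
    · simp
    have hac : a ≠ c := (nodup_append.1 hy).2.2 a mem_cons_self c mem_cons_self
    change (a :: x) ++ [a] ≤ (a :: x ++ c :: z) ++ [a] at h
    rw [append_assoc, append_le_append_left_iff, cons_append,
      cons_le_cons_iff_lt_of_ne _ _ hac] at h
    rw [append_assoc, append_le_append_left_iff, cons_append, cons_append,
      cons_le_cons_iff_lt_of_ne _ _ hac]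
    exact h
  · rcases y with _ | ⟨b, y⟩
    · simp
    rcases z with _ | ⟨c, z⟩
    · simp
    change (b :: y ++ c :: z) ++ [b] ≤ (b :: y) ++ [b] at h
    rw [append_assoc, append_le_append_left_iff, cons_append] at h
    have hcb : c ≠ b := by
      rintro rfl
      rcases h.lt_or_eq with h | h <;> simp at h
    rw [cons_le_cons_iff_lt_of_ne _ _ hcb] at h
    rw [append_assoc, append_le_append_left_iff, cons_append, cons_append,
      cons_le_cons_iff_lt_of_ne _ _ hcb]
    exact h
  · have hkey : ∀ (c : α) (r : List α),
        cycleKey (p ++ c :: r) = p ++ c :: (r ++ (p ++ c :: r).take 1) := by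
      simp [cycleKey]
    rw [hkey, hkey, append_le_append_left_iff, cons_le_cons_iff_lt_of_ne _ _ hab] at h
    simp only [append_assoc, cons_append, append_le_append_left_iff,
      cons_le_cons_iff_lt_of_ne _ _ hab]
    exact h

section ConcatOrder

variable {r : List α → List α → Prop} [Std.Refl r] [IsTrans (List α) r]

theorem rel_append_flatten_comm (hleft : ∀ p {u v}, r u v → r (p ++ u) (p ++ v))
    (hright : ∀ s {u v}, u.length = v.length → r u v → r (u ++ s) (v ++ s))
    {u : List α} {A : List (List α)} (hA : ∀ x ∈ A, r (u ++ x) (x ++ u)) :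
    r (u ++ A.flatten) (A.flatten ++ u) := by
  induction A with
  | nil => simpa using refl_of r u
  | cons x A ih =>
    have h₁ : r (u ++ x ++ A.flatten) (x ++ u ++ A.flatten) :=
      hright _ (by simp [Nat.add_comm]) (hA x mem_cons_self)
    have h₂ : r (x ++ (u ++ A.flatten)) (x ++ (A.flatten ++ u)) :=
      hleft x (ih fun y hy => hA y (mem_cons_of_mem x hy))
    simpa using _root_.trans h₁ (by simpa using h₂)

theorem rel_flatten_of_perm_of_pairwise (hleft : ∀ p {u v}, r u v → r (p ++ u) (p ++ v))
    (hright : ∀ s {u v}, u.length = v.length → r u v → r (u ++ s) (v ++ s))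
    {l S : List (List α)} (hl : l.Pairwise fun x y => r (x ++ y) (y ++ x)) (hS : l ~ S) :
    r l.flatten S.flatten := by
  induction l generalizing S with
  | nil => simpa [hS.symm.eq_nil] using refl_of r []
  | cons u l ih =>
    obtain ⟨A, B, rfl⟩ := append_of_mem (hS.subset mem_cons_self)
    have hperm : l ~ A ++ B := (hS.trans perm_middle).cons_inv
    have h₁ : r (u ++ l.flatten) (u ++ A.flatten ++ B.flatten) := by
      simpa using hleft u (ih hl.of_cons hperm)
    have h₂ : r (u ++ A.flatten ++ B.flatten) (A.flatten ++ u ++ B.flatten) :=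
      hright _ (by simp [Nat.add_comm]) <| rel_append_flatten_comm hleft hright fun x hx =>
        rel_of_pairwise_cons hl (hperm.symm.subset (mem_append_left B hx))
    simpa using _root_.trans h₁ h₂

end ConcatOrder

end List

open List

section Dictionary

variable {α : Type*}

open scoped Classical in
theorem IsSeparation.length_eq_sum {D : Finset (List α)} {S : List (List α)} {E : List α}
    (hS : IsSeparation D S E) : E.length = ∑ w ∈ S.toFinset, w.length := by
  rw [← hS.2.2, length_flatten, sum_toFinset _ hS.1]

theorem length_le_sum_of_mem_genSet {D : Finset (List α)} {E : List α} (hE : E ∈ genSet D) :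
    E.length ≤ ∑ w ∈ D, w.length := by
  classical
  obtain ⟨S, hS⟩ := hE
  rw [hS.length_eq_sum]
  exact Finset.sum_le_sum_of_subset fun w hw => hS.2.1 w (mem_toFinset.1 hw)

theorem IsSeparation.perm_toList_of_length_eq {D : Finset (List α)} (hne : [] ∉ D)
    {S : List (List α)} {E : List α} (hS : IsSeparation D S E)
    (hE : E.length = ∑ w ∈ D, w.length) : S ~ D.toList := by
  classical
  have hsub : S.toFinset ⊆ D := fun w hw => hS.2.1 w (mem_toFinset.1 hw)
  have hfin : S.toFinset = D := by
    by_contra hne'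
    obtain ⟨w, hwD, hwS⟩ := (Finset.ssubset_iff_of_subset hsub).1 (hsub.ssubset_of_ne hne')
    have hw : 0 < w.length := length_pos_iff.2 fun h => hne (h ▸ hwD)
    have := Finset.sum_lt_sum_of_subset hsub hwD hwS hw fun _ _ _ => Nat.zero_le _
    rw [← hS.length_eq_sum, hE] at this
    exact this.false
  refine (perm_ext_iff_of_nodup hS.1 (Finset.nodup_toList D)).2 fun w => ?_
  rw [Finset.mem_toList, ← hfin, mem_toFinset]

theorem flatten_mem_genSet_of_perm {D : Finset (List α)} {S : List (List α)}
    (hS : S ~ D.toList) : S.flatten ∈ genSet D :=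
  ⟨S, hS.nodup_iff.2 D.nodup_toList, fun _ hw => Finset.mem_toList.1 (hS.subset hw), rfl⟩

theorem length_flatten_of_perm {D : Finset (List α)} {S : List (List α)}
    (hS : S ~ D.toList) : S.flatten.length = ∑ w ∈ D, w.length := by
  rw [length_flatten, (hS.map _).sum_eq, Finset.sum_map_toList]

def fullSentences (D : Finset (List α)) : Set (List α) :=
  {E ∈ genSet D | E.length = ∑ w ∈ D, w.length}

theorem flatten_mem_fullSentences_of_perm {D : Finset (List α)} {S : List (List α)}
    (hS : S ~ D.toList) : S.flatten ∈ fullSentences D :=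
  ⟨flatten_mem_genSet_of_perm hS, length_flatten_of_perm hS⟩

theorem fullSentences_eq_of_genSet_eq {D D' : Finset (List α)} (h : genSet D = genSet D') :
    fullSentences D = fullSentences D' := by
  have hD := flatten_mem_fullSentences_of_perm (Perm.refl D.toList)
  have hD' := flatten_mem_fullSentences_of_perm (Perm.refl D'.toList)
  have hsum : ∑ w ∈ D, w.length = ∑ w ∈ D', w.length := by
    refine le_antisymm ?_ ?_
    · rw [← hD.2]; exact length_le_sum_of_mem_genSet (h ▸ hD.1)
    · rw [← hD'.2]; exact length_le_sum_of_mem_genSet (h ▸ hD'.1)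
  ext E
  simp only [fullSentences, h, hsum]

end Dictionary

section SortByCycleKey

variable {α : Type*} [LinearOrder α] {D : Finset (List α)}

noncomputable def sortByCycleKey (D : Finset (List α)) : List (List α) :=
  D.toList.mergeSort fun x y => cycleKey x ≤ cycleKey y

theorem sortByCycleKey_perm : sortByCycleKey D ~ D.toList :=
  mergeSort_perm _ _

@[simp]
theorem mem_sortByCycleKey {w : List α} : w ∈ sortByCycleKey D ↔ w ∈ D := by
  rw [sortByCycleKey_perm.mem_iff, Finset.mem_toList]

theorem pairwise_sortByCycleKey (hD : ∀ w ∈ D, w.Nodup) :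
    (sortByCycleKey D).Pairwise fun x y => x ++ y ≤ y ++ x := by
  have hsorted := pairwise_mergeSort (le := fun x y => decide (cycleKey x ≤ cycleKey y))
    (fun _ _ _ hab hbc => by simp only [decide_eq_true_eq] at *; exact hab.trans hbc)
    (fun _ _ => by simpa using le_total _ _) D.toList
  exact hsorted.imp_of_mem fun _ hy hxy =>
    append_le_append_comm_of_cycleKey_le (hD _ (mem_sortByCycleKey.1 hy)) (by simpa using hxy)

theorem sortByCycleKey_flatten_le (hD : ∀ w ∈ D, w ≠ [] ∧ w.Nodup) {E : List α}
    (hE : E ∈ fullSentences D) : (sortByCycleKey D).flatten ≤ E := by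
  obtain ⟨⟨S, hS⟩, hlen⟩ := hE
  rw [← hS.2.2]
  exact rel_flatten_of_perm_of_pairwise (fun p _ _ h => (append_le_append_left_iff p).2 h)
    (fun s _ _ hl h => append_le_append_of_le_of_length_eq h hl s)
    (pairwise_sortByCycleKey fun w hw => (hD w hw).2)
    (sortByCycleKey_perm.trans (hS.perm_toList_of_length_eq (fun h => (hD [] h).1 rfl) hlen).symm)

theorem le_reverse_sortByCycleKey_flatten (hD : ∀ w ∈ D, w ≠ [] ∧ w.Nodup) {E : List α}
    (hE : E ∈ fullSentences D) : E ≤ (sortByCycleKey D).reverse.flatten := by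
  obtain ⟨⟨S, hS⟩, hlen⟩ := hE
  rw [← hS.2.2]
  exact rel_flatten_of_perm_of_pairwise (r := (· ≥ ·))
    (fun p _ _ h => (append_le_append_left_iff p).2 h)
    (fun s _ _ hl h => append_le_append_of_le_of_length_eq h hl.symm s)
    (pairwise_reverse.2 (pairwise_sortByCycleKey fun w hw => (hD w hw).2))
    ((reverse_perm _).trans
      (sortByCycleKey_perm.trans (hS.perm_toList_of_length_eq (fun h => (hD [] h).1 rfl) hlen).symm))

end SortByCycleKey

theorem eq_of_genSet_eq {α : Type*} {D D' : Finset (List α)}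
    (hD : ∀ w ∈ D, w ≠ [] ∧ w.Nodup) (hD' : ∀ w ∈ D', w ≠ [] ∧ w.Nodup)
    (h : genSet D = genSet D') : D = D' := by
  let _ : LinearOrder α := LinearOrder.lift' _ embeddingToCardinal.injective
  have hF := fullSentences_eq_of_genSet_eq h
  have hmem : ∀ D : Finset (List α), (sortByCycleKey D).flatten ∈ fullSentences D ∧
      (sortByCycleKey D).reverse.flatten ∈ fullSentences D := fun _ =>
    ⟨flatten_mem_fullSentences_of_perm sortByCycleKey_perm,
      flatten_mem_fullSentences_of_perm ((reverse_perm _).trans sortByCycleKey_perm)⟩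
  have hleast : (sortByCycleKey D).flatten = (sortByCycleKey D').flatten :=
    le_antisymm (sortByCycleKey_flatten_le hD (hF ▸ (hmem D').1))
      (sortByCycleKey_flatten_le hD' (hF ▸ (hmem D).1))
  have hgreatest : (sortByCycleKey D).reverse.flatten = (sortByCycleKey D').reverse.flatten :=
    le_antisymm (le_reverse_sortByCycleKey_flatten hD' (hF ▸ (hmem D).2))
      (le_reverse_sortByCycleKey_flatten hD (hF ▸ (hmem D').2))
  have hsort : sortByCycleKey D = sortByCycleKey D' :=
    eq_of_flatten_eq_of_reverse_flatten_eq (fun w hw => hD w (mem_sortByCycleKey.1 hw))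
      (fun w hw => hD' w (mem_sortByCycleKey.1 hw)) hleast hgreatest
  ext w
  rw [← mem_sortByCycleKey, hsort, mem_sortByCycleKey]

theorem CondA2.nodup_s3 {α : Type*} {D : Finset (List α)} (h : CondA2 D) {w : List α}
    (hw : w ∈ D) : w.Nodup := by
  rcases w with _ | ⟨a, _ | ⟨b, t⟩⟩
  · exact nodup_nil
  · exact nodup_singleton a
  · exact h _ hw (by simp)

theorem union_dictionary_identifiable_general {𝓔 : Type*} [DecidableEq 𝓔]
    {C : Type*} [Fintype C]
    (Dc Dc' : C → Finset (List 𝓔))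
    (hne : ∀ c, ∀ w ∈ Dc c, w ≠ []) (hne' : ∀ c, ∀ w ∈ Dc' c, w ≠ [])
    (hA2 : CondA2 (Finset.univ.biUnion Dc)) (hA2' : CondA2 (Finset.univ.biUnion Dc')) :
    genSet (Finset.univ.biUnion Dc) = genSet (Finset.univ.biUnion Dc') ↔
      Finset.univ.biUnion Dc = Finset.univ.biUnion Dc' := by
  have hsimple : ∀ D : C → Finset (List 𝓔), (∀ c, ∀ w ∈ D c, w ≠ []) →
      CondA2 (Finset.univ.biUnion D) → ∀ w ∈ Finset.univ.biUnion D, w ≠ [] ∧ w.Nodup :=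
    fun _ hD hA w hw =>
      ⟨by obtain ⟨c, -, hc⟩ := Finset.mem_biUnion.1 hw; exact hD c w hc, hA.nodup_s3 hw⟩
  exact ⟨eq_of_genSet_eq (hsimple Dc hne hA2) (hsimple Dc' hne' hA2'), congrArg genSet⟩

/-- **The sentence set generated by an equivalence class determines its union dictionary.**
Let `(Dc c)_{c ∈ C}` and `(Dc' c)_{c ∈ C}` be two finite families of dictionaries of
nonempty patterns with union dictionaries `DC` and `DC'`. If `DC` and `DC'` satisfy
Condition A2 and both families satisfy Condition A1 (with ambient sentence sets `O(DC)`
and `O(DC')` respectively), then `O(DC) = O(DC')` if and only if `DC = DC'`. -/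
theorem union_dictionary_identifiable {𝓔 : Type*} [DecidableEq 𝓔]
    {C : Type*} [Fintype C]
    (Dc Dc' : C → Finset (List 𝓔))
    (hne : ∀ c, ∀ w ∈ Dc c, w ≠ []) (hne' : ∀ c, ∀ w ∈ Dc' c, w ≠ [])
    (hA2 : CondA2 (Finset.univ.biUnion Dc)) (hA2' : CondA2 (Finset.univ.biUnion Dc'))
    (hA1 : CondA1 (fun _ : C => Finset.univ.biUnion Dc) Dc)
    (hA1' : CondA1 (fun _ : C => Finset.univ.biUnion Dc') Dc') :
    genSet (Finset.univ.biUnion Dc) = genSet (Finset.univ.biUnion Dc') ↔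
      Finset.univ.biUnion Dc = Finset.univ.biUnion Dc' :=
  union_dictionary_identifiable_general Dc Dc' hne hne' hA2 hA2'
end

section
/- Fix J ≥ 1 latent classes, a nonempty dictionary D over an event alphabet, intensities λ_1, …, λ_J > 0, mixing proportions π_1, …, π_J with π_j > 0 for all j and Σ_j π_j = 1, and κ > 0. For θ = {θ_{jw}} ∈ [0,1]^{J×D}, let p_θ denote the LTDM density of an observation. Then the following are equivalent: (i) there exist a function G, defined on pairs consisting of the event data (K, (E_1,…,E_K)) and the parameter θ, and a function F, defined on full observations (K, (E_1,…,E_K), (T̃_1,…,T̃_K)) and not depending on θ, such that p_θ(K, (E_1,…,E_K), (T̃_1,…,T̃_K)) = G((K, (E_1,…,E_K)), θ) · F(K, (E_1,…,E_K), (T̃_1,…,T̃_K)) for every θ ∈ [0,1]^{J×D} and every observation; (ii) λ_1 = λ_2 = ⋯ = λ_J. -/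
open scoped Classical

/-- The event-pattern part of the LTDM likelihood of a sentence `E` for a class with
pattern probabilities `θ`:
`Σ_{S ∈ 𝓕_D(E)} (1/n_S!) ∏_{w ∈ D} θ_w^{1{w ∈ S}} (1-θ_w)^{1{w ∉ S}}`.
(The set of separations is finite, so the `tsum` is the corresponding finite sum.) -/
noncomputable def sepSum {𝓔 : Type*} (D : Finset (List 𝓔)) (θ : {w // w ∈ D} → ℝ)
    (E : List 𝓔) : ℝ :=
  ∑' S : {S : List (List 𝓔) // IsSeparation D S E},
    (1 / (Nat.factorial (S : List (List 𝓔)).length : ℝ)) *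
      ∏ w ∈ D.attach, (if (w : List 𝓔) ∈ (S : List (List 𝓔)) then θ w else 1 - θ w)

/-- The LTDM density of an observation `(K, (E_1,…,E_K), (T̃_1,…,T̃_K))` under parameters
`(D, θ, λ, π, κ)`:
`(κ^K e^{-κ}/K!) Σ_j π_j ∏_k [sepSum D (θ j) (E k)] ∏_u λ_j e^{-λ_j t̃_{k,u}}`. -/
noncomputable def ltdmDensity {𝓔 : Type*} {J : ℕ} (D : Finset (List 𝓔))
    (θ : Fin J → {w // w ∈ D} → ℝ) (lam : Fin J → ℝ) (π : Fin J → ℝ) (κ : ℝ)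
    (K : ℕ) (E : Fin K → List 𝓔) (T : (k : Fin K) → Fin (E k).length → ℝ) : ℝ :=
  (κ ^ K * Real.exp (-κ) / (Nat.factorial K : ℝ)) *
    ∑ j, π j * ∏ k, (sepSum D (θ j) (E k) *
      ∏ u, lam j * Real.exp (-(lam j) * T k u))

/-!
If `λ` is constant, the exponential time factor comes out of the mixture sum and the density
factors. Conversely, put all the mass of class `i` on a single pattern `w₀` and none on the other
classes; then only class `i` can explain the one-sentence observation `E = w₀` with all event
times equal to `t`, so its density is `cᵢ e^{-n λᵢ t}` with `n = |w₀| > 0` and `cᵢ ≠ 0`.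
A factorization `G(θ) F(t)` makes `t ↦ e^{-n λᵢ t}` proportional to the same function `F` for
every `i`, which forces all the decay rates `n λᵢ` to agree.
-/

theorem eq_of_mul_exp_mul_eq_mul {a b A B μ ν : ℝ} {f : ℝ → ℝ} (ha : a ≠ 0) (hb : b ≠ 0)
    (hμ : ∀ t > 0, a * Real.exp (μ * t) = A * f t) (hν : ∀ t > 0, b * Real.exp (ν * t) = B * f t) :
    μ = ν := by
  have hcross : a * b * Real.exp (μ * 1 + ν * 2) = a * b * Real.exp (μ * 2 + ν * 1) := by
    calc a * b * Real.exp (μ * 1 + ν * 2) = (a * Real.exp (μ * 1)) * (b * Real.exp (ν * 2)) := by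
          rw [Real.exp_add]; ring
      _ = (a * Real.exp (μ * 2)) * (b * Real.exp (ν * 1)) := by
          rw [hμ 1 one_pos, hν 2 two_pos, hμ 2 two_pos, hν 1 one_pos]; ring
      _ = a * b * Real.exp (μ * 2 + ν * 1) := by rw [Real.exp_add]; ring
  have := Real.exp_injective (mul_left_cancel₀ (mul_ne_zero ha hb) hcross)
  linarith

section SepSum

variable {𝓔 : Type*} {D : Finset (List 𝓔)} {θ : {w // w ∈ D} → ℝ} {E : List 𝓔}

theorem prod_sepWeight_eq_zero {S : List (List 𝓔)} (w : {w // w ∈ D})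
    (hw : if (w : List 𝓔) ∈ S then θ w = 0 else θ w = 1) :
    ∏ w ∈ D.attach, (if (w : List 𝓔) ∈ S then θ w else 1 - θ w) = 0 :=
  Finset.prod_eq_zero (Finset.mem_attach _ w) (by split_ifs at hw ⊢ <;> simp [hw])

theorem sepSum_zero (hE : E ≠ []) : sepSum D 0 E = 0 := by
  refine (tsum_congr fun S => mul_eq_zero_of_right _ ?_).trans tsum_zero
  obtain ⟨S, -, hSD, hSE⟩ := S
  obtain ⟨w, hw⟩ := List.exists_mem_of_ne_nil S (by rintro rfl; exact hE hSE.symm)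
  exact prod_sepWeight_eq_zero ⟨w, hSD w hw⟩ (by simp [hw])

theorem eq_singleton_of_nodup_of_forall_eq {α : Type*} {S : List α} {a : α} (hS : S.Nodup)
    (ha : a ∈ S) (h : ∀ b ∈ S, b = a) : S = [a] := by
  obtain hrep := List.eq_replicate_iff.mpr ⟨rfl, h⟩
  have hle : S.length ≤ 1 := List.nodup_replicate.mp (hrep ▸ hS)
  have hpos : 0 < S.length := List.length_pos_of_mem ha
  rwa [show S.length = 1 by omega] at hrep

noncomputable def patternIndicator (D : Finset (List 𝓔)) (w₀ : List 𝓔) : {w // w ∈ D} → ℝ :=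
  fun w => if (w : List 𝓔) = w₀ then 1 else 0

theorem sepSum_patternIndicator_self {w₀ : List 𝓔} (hw₀ : w₀ ∈ D) :
    sepSum D (patternIndicator D w₀) w₀ = 1 := by
  have hsep : IsSeparation D [w₀] w₀ := ⟨List.nodup_singleton w₀, by simpa using hw₀, by simp⟩
  unfold sepSum
  rw [tsum_eq_single (⟨[w₀], hsep⟩ : {S // IsSeparation D S w₀})]
  · simp only [List.length_singleton, Nat.factorial_one, Nat.cast_one, div_one, one_mul,
      List.mem_singleton, patternIndicator]
    exact Finset.prod_eq_one fun w _ => by split_ifs <;> simp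
  · rintro ⟨S, hS, hSD, _⟩ hne
    refine mul_eq_zero_of_right _ ?_
    by_cases hw₀S : w₀ ∈ S
    · obtain ⟨w, hwS, hww₀⟩ : ∃ w ∈ S, w ≠ w₀ := by
        by_contra! h
        exact hne (Subtype.ext (eq_singleton_of_nodup_of_forall_eq hS hw₀S h))
      exact prod_sepWeight_eq_zero ⟨w, hSD w hwS⟩ (by simp [hwS, hww₀, patternIndicator])
    · exact prod_sepWeight_eq_zero ⟨w₀, hw₀⟩ (by simp [hw₀S, patternIndicator])

end SepSum

section Density

variable {𝓔 : Type*} {J : ℕ} {D : Finset (List 𝓔)}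

theorem ltdmDensity_const_intensity (θ : Fin J → {w // w ∈ D} → ℝ) (c : ℝ) (π : Fin J → ℝ)
    (κ : ℝ) (K : ℕ) (E : Fin K → List 𝓔) (T : (k : Fin K) → Fin (E k).length → ℝ) :
    ltdmDensity D θ (fun _ => c) π κ K E T =
      (∑ j, π j * ∏ k, sepSum D (θ j) (E k)) *
        (κ ^ K * Real.exp (-κ) / (Nat.factorial K : ℝ) * ∏ k, ∏ u, c * Real.exp (-c * T k u)) := by
  simp only [ltdmDensity, Finset.prod_mul_distrib, Finset.sum_mul, Finset.mul_sum]
  exact Finset.sum_congr rfl fun j _ => by ring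

theorem single_patternIndicator_mem_Icc (i : Fin J) (w₀ : List 𝓔) (j : Fin J)
    (w : {w // w ∈ D}) :
    (Pi.single i (patternIndicator D w₀) : Fin J → _) j w ∈ Set.Icc (0 : ℝ) 1 := by
  simp only [Pi.single_apply]
  split_ifs
  · unfold patternIndicator
    split_ifs <;> simp
  · simp

theorem ltdmDensity_single_patternIndicator {w₀ : List 𝓔} (hw₀ : w₀ ∈ D) (hw₀ne : w₀ ≠ [])
    (lam π : Fin J → ℝ) (κ : ℝ) (i : Fin J) (t : ℝ) :
    ltdmDensity D (Pi.single i (patternIndicator D w₀)) lam π κ 1 (fun _ => w₀) (fun _ _ => t) =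
      κ * Real.exp (-κ) * π i * lam i ^ w₀.length * Real.exp (-(w₀.length * lam i) * t) := by
  rw [ltdmDensity, Finset.sum_eq_single i
    (fun j _ hj => by simp [Pi.single_eq_of_ne hj, sepSum_zero hw₀ne]) (by simp)]
  simp only [Pi.single_eq_same, sepSum_patternIndicator_self hw₀, Finset.prod_const,
    Finset.card_univ, Fintype.card_fin, mul_pow, ← Real.exp_nat_mul, pow_one,
    Nat.factorial_one, Nat.cast_one, div_one, one_mul]
  ring_nf

end Density

theorem ltdm_density_factorization_iff_general {𝓔 : Type*} {J : ℕ} (hJ : 1 ≤ J)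
    (D : Finset (List 𝓔)) (hDne : D.Nonempty) (hpat : ∀ w ∈ D, w ≠ [])
    (lam : Fin J → ℝ) (hlam : ∀ j, 0 < lam j)
    (π : Fin J → ℝ) (hπ : ∀ j, 0 < π j)
    (κ : ℝ) (hκ : 0 < κ) :
    (∃ (G : ((K : ℕ) × (Fin K → List 𝓔)) → (Fin J → {w // w ∈ D} → ℝ) → ℝ)
       (F : ((K : ℕ) × (E : Fin K → List 𝓔) ×
              ((k : Fin K) → Fin (E k).length → ℝ)) → ℝ),
       ∀ (θ : Fin J → {w // w ∈ D} → ℝ), (∀ j w, θ j w ∈ Set.Icc (0 : ℝ) 1) →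
       ∀ (K : ℕ) (E : Fin K → List 𝓔) (T : (k : Fin K) → Fin (E k).length → ℝ),
         (∀ k u, 0 < T k u) →
         ltdmDensity D θ lam π κ K E T = G ⟨K, E⟩ θ * F ⟨K, E, T⟩) ↔
    ∀ j j' : Fin J, lam j = lam j' := by
  constructor
  · rintro ⟨G, F, hGF⟩ j j'
    obtain ⟨w₀, hw₀⟩ := hDne
    have hobs : ∀ i, ∀ t > 0,
        κ * Real.exp (-κ) * π i * lam i ^ w₀.length * Real.exp (-(w₀.length * lam i) * t) =
          G ⟨1, fun _ => w₀⟩ (Pi.single i (patternIndicator D w₀)) *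
            F ⟨1, fun _ => w₀, fun _ _ => t⟩ := fun i t ht => by
      rw [← ltdmDensity_single_patternIndicator hw₀ (hpat w₀ hw₀)]
      exact hGF _ (single_patternIndicator_mem_Icc i w₀) 1 _ _ fun _ _ => ht
    have hcoef : ∀ i, κ * Real.exp (-κ) * π i * lam i ^ w₀.length ≠ 0 := fun i => by
      have := hlam i; have := hπ i; positivity
    have hrate := eq_of_mul_exp_mul_eq_mul (hcoef j) (hcoef j') (hobs j) (hobs j')
    have hlen : (w₀.length : ℝ) ≠ 0 := by simpa using hpat w₀ hw₀
    exact mul_left_cancel₀ hlen (neg_inj.mp hrate)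
  · intro hlam_eq
    have hlam_const : lam = fun _ => lam ⟨0, hJ⟩ := funext fun j => hlam_eq j _
    refine ⟨fun KE θ => ∑ j, π j * ∏ k, sepSum D (θ j) (KE.2 k),
      fun obs => κ ^ obs.1 * Real.exp (-κ) / (Nat.factorial obs.1 : ℝ) *
        ∏ k, ∏ u, lam ⟨0, hJ⟩ * Real.exp (-lam ⟨0, hJ⟩ * obs.2.2 k u),
      fun θ _ K E T _ => ?_⟩
    rw [hlam_const]
    exact ltdmDensity_const_intensity θ _ π κ K E T

/-- **Factorization of the LTDM density (Proposition 1).**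
Fix `J ≥ 1` classes, a nonempty dictionary `D` of nonempty patterns, intensities
`λ_j > 0`, mixing proportions `π_j > 0` summing to `1`, and `κ > 0`. The LTDM density
factors as `p_θ = G(event data, θ) · F(observation)` with `F` free of `θ`, for all
`θ ∈ [0,1]^{J×D}` and all observations, if and only if `λ_1 = ⋯ = λ_J`. -/
theorem ltdm_density_factorization_iff {𝓔 : Type*} {J : ℕ} (hJ : 1 ≤ J)
    (D : Finset (List 𝓔)) (hDne : D.Nonempty) (hpat : ∀ w ∈ D, w ≠ [])
    (lam : Fin J → ℝ) (hlam : ∀ j, 0 < lam j)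
    (π : Fin J → ℝ) (hπ : ∀ j, 0 < π j) (hsum : ∑ j, π j = 1)
    (κ : ℝ) (hκ : 0 < κ) :
    (∃ (G : ((K : ℕ) × (Fin K → List 𝓔)) → (Fin J → {w // w ∈ D} → ℝ) → ℝ)
       (F : ((K : ℕ) × (E : Fin K → List 𝓔) ×
              ((k : Fin K) → Fin (E k).length → ℝ)) → ℝ),
       ∀ (θ : Fin J → {w // w ∈ D} → ℝ), (∀ j w, θ j w ∈ Set.Icc (0 : ℝ) 1) →
       ∀ (K : ℕ) (E : Fin K → List 𝓔) (T : (k : Fin K) → Fin (E k).length → ℝ),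
         (∀ k u, 0 < T k u) →
         ltdmDensity D θ lam π κ K E T = G ⟨K, E⟩ θ * F ⟨K, E, T⟩) ↔
    ∀ j j' : Fin J, lam j = lam j' :=
  ltdm_density_factorization_iff_general hJ D hDne hpat lam hlam π hπ κ hκ
end

section
/- Let J ≥ 2 and let T_1, T_1' be I×J real matrices, T_2, T_2' be J'×J real matrices (same row dimension for each pair), and T_3, T_3' be K×J real matrices. Assume that T_1, T_2 and T_3 each have full column rank J, that the first row of each of T_1, T_2, T_1', T_2' has all entries equal to 1, and that the triple products agree: Σ_{r=1}^J T_1[i,r] T_2[j,r] T_3[k,r] = Σ_{r=1}^J T_1'[i,r] T_2'[j,r] T_3'[k,r] for all indices i, j, k. Then there exists a J×J permutation matrix P such that T_1' = T_1 P, T_2' = T_2 P, and T_3' = T_3 P. -/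
open Finset

/-- From linear independence: a vanishing combination has zero coefficients. -/
lemma li_of_sums {n : Type*} [Fintype n] {J : ℕ} {v : Fin J → n → ℝ}
    (hv : LinearIndependent ℝ v) {g : Fin J → ℝ}
    (h : ∀ i, ∑ r, g r * v r i = 0) : ∀ r, g r = 0 := by
  refine Fintype.linearIndependent_iff.mp hv g ?_
  funext i
  simpa [Finset.sum_apply] using h i

/-- Dual functionals for a linearly independent finite family in `ℝ^n`. -/
lemma exists_dual {n : Type*} [Fintype n] {J : ℕ} {v : Fin J → n → ℝ}
    (hv : LinearIndependent ℝ v) (s : Fin J) :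
    ∃ y : n → ℝ, ∀ r, ∑ i, y i * v r i = if r = s then 1 else 0 := by
  classical
  set G : Matrix (Fin J) (Fin J) ℝ := fun r r' => ∑ i, v r i * v r' i with hG
  have hker : ∀ x : Fin J → ℝ, G.mulVec x = 0 → x = 0 := by
    intro x hx
    have hsq : ∑ i, (∑ r, x r * v r i) ^ 2 = 0 := by
      have : ∑ r, x r * (G.mulVec x) r = 0 := by
        simp [hx]
      calc ∑ i, (∑ r, x r * v r i) ^ 2
          = ∑ r, x r * (G.mulVec x) r := by
            simp only [pow_two, Matrix.mulVec, dotProduct, hG, Finset.mul_sum,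
              Finset.sum_mul]
            rw [Finset.sum_comm]
            refine Finset.sum_congr rfl fun r _ => ?_
            rw [Finset.sum_comm]
            refine Finset.sum_congr rfl fun r' _ => ?_
            refine Finset.sum_congr rfl fun i _ => ?_
            ring
        _ = 0 := this
    have hzero : ∀ i, ∑ r, x r * v r i = 0 := by
      intro i
      have := (Finset.sum_eq_zero_iff_of_nonneg (fun i _ => sq_nonneg _)).mp hsq i (mem_univ i)
      exact pow_eq_zero_iff (by norm_num) |>.mp this
    funext r
    exact li_of_sums hv hzero r
  have hinj : Function.Injective G.mulVec := by
    intro x y hxy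
    have := hker (x - y) (by rw [Matrix.mulVec_sub, hxy, sub_self])
    exact sub_eq_zero.mp this
  have hunit : IsUnit G := (Matrix.mulVec_injective_iff_isUnit).mp hinj
  have hsurj : Function.Surjective G.mulVec := (Matrix.mulVec_surjective_iff_isUnit).mpr hunit
  obtain ⟨x, hx⟩ := hsurj ((Pi.single s 1 : Fin J → ℝ))
  refine ⟨fun i => ∑ r, x r * v r i, fun r => ?_⟩
  have : (G.mulVec x) r = (Pi.single s 1 : Fin J → ℝ) r := by rw [hx]
  rw [Matrix.mulVec, dotProduct] at this
  calc ∑ i, (∑ r', x r' * v r' i) * v r i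
      = ∑ r', G r r' * x r' := by
        simp only [Finset.sum_mul]
        rw [Finset.sum_comm]
        refine Finset.sum_congr rfl fun r' _ => ?_
        simp only [hG, Finset.sum_mul, Finset.mul_sum]
        refine Finset.sum_congr rfl fun i _ => ?_
        ring
    _ = if r = s then 1 else 0 := by rw [this, Pi.single_apply]

/-- Khatri–Rao: vanishing combinations of `a r ⊗ b r` have zero coefficients. -/
lemma khatriRao_li {m n : Type*} [Fintype m] [Fintype n] {J : ℕ}
    {a : Fin J → m → ℝ} {b : Fin J → n → ℝ}
    (ha : LinearIndependent ℝ a) (hb : LinearIndependent ℝ b) {g : Fin J → ℝ}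
    (h : ∀ i j, ∑ r, g r * (a r i * b r j) = 0) : ∀ r, g r = 0 := by
  have key : ∀ r i, g r * a r i = 0 := by
    intro r i
    exact li_of_sums hb (g := fun r => g r * a r i)
      (fun j => by have := h i j; simpa [mul_assoc] using this) r
  intro r
  by_contra hg
  have : a r = 0 := funext fun i => by
    have := key r i
    rcases mul_eq_zero.mp this with h' | h'
    · exact absurd h' hg
    · exact h'
  exact ha.ne_zero r this

/-- Khatri–Rao as linear independence. -/
lemma khatriRao_linearIndependent {m n : Type*} [Fintype m] [Fintype n] {J : ℕ}
    {a : Fin J → m → ℝ} {b : Fin J → n → ℝ}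
    (ha : LinearIndependent ℝ a) (hb : LinearIndependent ℝ b) :
    LinearIndependent ℝ (fun r => fun p : m × n => a r p.1 * b r p.2) := by
  refine Fintype.linearIndependent_iff.mpr fun g hg r => ?_
  refine khatriRao_li ha hb (g := g) (fun i j => ?_) r
  have := congrFun hg (i, j)
  simpa [Finset.sum_apply] using this

/-- If an independent family lies in the span of another family of the same (finite)
cardinality, the latter is independent too. -/
lemma li_of_span {m : Type*} [Fintype m] {J : ℕ} {a a' : Fin J → m → ℝ}
    (ha : LinearIndependent ℝ a)
    (hspan : ∀ s, a s ∈ Submodule.span ℝ (Set.range a')) :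
    LinearIndependent ℝ a' := by
  rw [linearIndependent_iff_card_eq_finrank_span]
  have hle : Submodule.span ℝ (Set.range a) ≤ Submodule.span ℝ (Set.range a') := by
    rw [Submodule.span_le]
    rintro _ ⟨s, rfl⟩
    exact hspan s
  have h1 : (Set.range a').finrank ℝ ≤ Fintype.card (Fin J) := finrank_range_le_card a'
  have h2 : Fintype.card (Fin J) ≤ (Set.range a').finrank ℝ := by
    rw [← finrank_span_eq_card ha]
    exact Submodule.finrank_mono hle
  omega



/-- A square real matrix is a permutation matrix if, for some permutation `σ`,
its `(i,j)` entry is `1` when `i = σ j` and `0` otherwise (so that right-multiplication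
by it permutes columns). -/
def IsPermMatrix {R : ℕ} (P : Matrix (Fin R) (Fin R) ℝ) : Prop :=
  ∃ σ : Equiv.Perm (Fin R), ∀ i j, P i j = if σ j = i then 1 else 0

/-- **Corollary of Kruskal's theorem used in the LTDM identifiability proof.**
If `T₁, T₂, T₃` have full column rank `J ≥ 2`, the first rows of `T₁, T₂, T₁', T₂'` are
all ones, and the triple products of `(T₁, T₂, T₃)` and `(T₁', T₂', T₃')` agree, then
there is a permutation matrix `P` with `T₁' = T₁ P`, `T₂' = T₂ P` and `T₃' = T₃ P`. -/
theorem kruskal_corollary_all_ones_rows {J I J' K : ℕ} (hJ : 2 ≤ J)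
    (hI : 0 < I) (hJ' : 0 < J')
    (T₁ T₁' : Matrix (Fin I) (Fin J) ℝ)
    (T₂ T₂' : Matrix (Fin J') (Fin J) ℝ)
    (T₃ T₃' : Matrix (Fin K) (Fin J) ℝ)
    (hrk₁ : LinearIndependent ℝ (fun c : Fin J => fun i : Fin I => T₁ i c))
    (hrk₂ : LinearIndependent ℝ (fun c : Fin J => fun j : Fin J' => T₂ j c))
    (hrk₃ : LinearIndependent ℝ (fun c : Fin J => fun k : Fin K => T₃ k c))
    (hrow₁ : ∀ r, T₁ ⟨0, hI⟩ r = 1) (hrow₁' : ∀ r, T₁' ⟨0, hI⟩ r = 1)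
    (hrow₂ : ∀ r, T₂ ⟨0, hJ'⟩ r = 1) (hrow₂' : ∀ r, T₂' ⟨0, hJ'⟩ r = 1)
    (htriple : ∀ (i : Fin I) (j : Fin J') (k : Fin K),
      ∑ r, T₁ i r * T₂ j r * T₃ k r = ∑ r, T₁' i r * T₂' j r * T₃' k r) :
    ∃ P : Matrix (Fin J) (Fin J) ℝ,
      IsPermMatrix P ∧ T₁' = T₁ * P ∧ T₂' = T₂ * P ∧ T₃' = T₃ * P := by
  classical
  set i₀ : Fin I := ⟨0, hI⟩
  set j₀ : Fin J' := ⟨0, hJ'⟩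
  -- dual functionals for the columns of T₃
  choose c hc using fun s => exists_dual hrk₃ s
  set d : Fin J → Fin J → ℝ := fun s r => ∑ k, c s k * T₃' k r with hd
  -- key slice equation
  have E : ∀ (s : Fin J) (i : Fin I) (j : Fin J'),
      T₁ i s * T₂ j s = ∑ r, d s r * (T₁' i r * T₂' j r) := by
    intro s i j
    have h1 : ∑ k, c s k * ∑ r, T₁ i r * T₂ j r * T₃ k r
        = T₁ i s * T₂ j s := by
      simp only [Finset.mul_sum]
      rw [Finset.sum_comm]
      have : ∀ r : Fin J, ∑ k, c s k * (T₁ i r * T₂ j r * T₃ k r)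
          = (T₁ i r * T₂ j r) * ∑ k, c s k * T₃ k r := by
        intro r; rw [Finset.mul_sum]; exact Finset.sum_congr rfl fun k _ => by ring
      rw [Finset.sum_congr rfl fun r _ => this r]
      rw [Finset.sum_congr rfl fun r _ => by rw [hc s r]]
      simp [Finset.sum_ite_eq']
    have h2 : ∑ k, c s k * ∑ r, T₁' i r * T₂' j r * T₃' k r
        = ∑ r, d s r * (T₁' i r * T₂' j r) := by
      simp only [Finset.mul_sum]
      rw [Finset.sum_comm]
      refine Finset.sum_congr rfl fun r _ => ?_
      simp only [hd, Finset.sum_mul]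
      exact Finset.sum_congr rfl fun k _ => by ring
    rw [← h1, ← h2]
    exact Finset.sum_congr rfl fun k _ => by rw [htriple i j k]
  -- columns of T₁ lie in span of columns of T₁'
  have ha_span : ∀ s, (fun i => T₁ i s) ∈
      Submodule.span ℝ (Set.range (fun r => fun i : Fin I => T₁' i r)) := by
    intro s
    have : (fun i => T₁ i s) = ∑ r, d s r • (fun i => T₁' i r) := by
      funext i
      have := E s i j₀
      simp only [hrow₂ s, hrow₂', mul_one] at this
      simpa [Finset.sum_apply] using this
    rw [this]
    exact Submodule.sum_mem _ fun r _ => Submodule.smul_mem _ _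
      (Submodule.subset_span (Set.mem_range_self r))
  have hb_span : ∀ s, (fun j => T₂ j s) ∈
      Submodule.span ℝ (Set.range (fun r => fun j : Fin J' => T₂' j r)) := by
    intro s
    have : (fun j => T₂ j s) = ∑ r, d s r • (fun j => T₂' j r) := by
      funext j
      have := E s i₀ j
      simp only [hrow₁ s, hrow₁', one_mul] at this
      simpa [Finset.sum_apply] using this
    rw [this]
    exact Submodule.sum_mem _ fun r _ => Submodule.smul_mem _ _
      (Submodule.subset_span (Set.mem_range_self r))
  have hrk₁' : LinearIndependent ℝ (fun r : Fin J => fun i : Fin I => T₁' i r) :=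
    li_of_span hrk₁ ha_span
  have hrk₂' : LinearIndependent ℝ (fun r : Fin J => fun j : Fin J' => T₂' j r) :=
    li_of_span hrk₂ hb_span
  -- for each s, d s has exactly one nonzero entry
  have huniq : ∀ s : Fin J, ∃ r, d s r ≠ 0 ∧ ∀ r', d s r' ≠ 0 → r' = r := by
    intro s
    -- existence
    have hex : ∃ r, d s r ≠ 0 := by
      by_contra hall
      push_neg at hall
      have := E s i₀ j₀
      simp [hrow₁, hrow₂, hall] at this
    obtain ⟨r₁, hr₁⟩ := hex
    refine ⟨r₁, hr₁, fun r₂ hr₂ => ?_⟩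
    by_contra hne
    -- scalar relations
    have hrel : ∀ r : Fin J, d s r ≠ 0 →
        ∃ μ : ℝ, μ ≠ 0 ∧ ∀ i, d s r * T₁' i r = μ * T₁ i s := by
      intro r hr
      obtain ⟨y, hy⟩ := exists_dual hrk₂' r
      set μ : ℝ := ∑ j, y j * T₂ j s with hμ
      have key : ∀ i, d s r * T₁' i r = μ * T₁ i s := by
        intro i
        have h1 : ∑ j, y j * (T₁ i s * T₂ j s) = μ * T₁ i s := by
          rw [hμ, Finset.sum_mul]
          exact Finset.sum_congr rfl fun j _ => by ring
        have h2 : ∑ j, y j * ∑ r', d s r' * (T₁' i r' * T₂' j r')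
            = d s r * T₁' i r := by
          simp only [Finset.mul_sum]
          rw [Finset.sum_comm]
          have : ∀ r', ∑ j, y j * (d s r' * (T₁' i r' * T₂' j r'))
              = (d s r' * T₁' i r') * ∑ j, y j * T₂' j r' := by
            intro r'; rw [Finset.mul_sum]; exact Finset.sum_congr rfl fun j _ => by ring
          rw [Finset.sum_congr rfl fun r' _ => this r']
          rw [Finset.sum_congr rfl fun r' _ => by rw [hy r']]
          simp [Finset.sum_ite_eq']
        rw [← h2]
        rw [← Finset.sum_congr rfl fun j _ => by rw [← E s i j]]
        rw [h1]
      refine ⟨μ, ?_, key⟩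
      intro hμ0
      have hz : (fun i => T₁' i r) = 0 := by
        funext i
        have := key i
        rw [hμ0, zero_mul] at this
        have := mul_eq_zero.mp this
        rcases this with h' | h'
        · exact absurd h' hr
        · exact h'
      exact hrk₁'.ne_zero r hz
    obtain ⟨μ₁, hμ₁, hk₁⟩ := hrel r₁ hr₁
    obtain ⟨μ₂, hμ₂, hk₂⟩ := hrel r₂ hr₂
    set g : Fin J → ℝ :=
      fun r => if r = r₁ then μ₂ * d s r₁ else if r = r₂ then -(μ₁ * d s r₂) else 0 with hg
    have hgsum : ∀ i, ∑ r, g r * T₁' i r = 0 := by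
      intro i
      have hsplit : ∑ r, g r * T₁' i r
          = μ₂ * d s r₁ * T₁' i r₁ + -(μ₁ * d s r₂) * T₁' i r₂ := by
        have hterm : ∀ r, g r * T₁' i r
            = (if r = r₁ then μ₂ * d s r₁ * T₁' i r₁ else 0)
              + (if r = r₂ then -(μ₁ * d s r₂) * T₁' i r₂ else 0) := by
          intro r
          by_cases h1 : r = r₁
          · simp [hg, h1, show ¬ r₁ = r₂ from fun h => hne h.symm]
          · by_cases h2 : r = r₂
            · simp [hg, h1, h2, hne]
            · simp [hg, h1, h2]
        rw [Finset.sum_congr rfl fun r _ => hterm r, Finset.sum_add_distrib]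
        simp [Finset.sum_ite_eq']
      rw [hsplit]
      have e₁ : d s r₁ * T₁' i r₁ = μ₁ * T₁ i s := hk₁ i
      have e₂ : d s r₂ * T₁' i r₂ = μ₂ * T₁ i s := hk₂ i
      linear_combination μ₂ * e₁ - μ₁ * e₂
    have := li_of_sums hrk₁' hgsum r₁
    simp [hg] at this
    rcases this with h' | h'
    · exact hμ₂ h'
    · exact hr₁ h'
  -- choose the permutation
  choose σ hσ1 hσ2 using huniq
  have hzero : ∀ s r, r ≠ σ s → d s r = 0 := by
    intro s r hr
    by_contra h
    exact hr (hσ2 s r h)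
  -- the simplified slice equation
  have E' : ∀ (s : Fin J) (i : Fin I) (j : Fin J'),
      T₁ i s * T₂ j s = d s (σ s) * (T₁' i (σ s) * T₂' j (σ s)) := by
    intro s i j
    rw [E s i j]
    rw [Finset.sum_eq_single (σ s)]
    · intro r _ hr
      rw [hzero s r hr, zero_mul]
    · intro h
      exact absurd (Finset.mem_univ _) h
  have hlam : ∀ s, d s (σ s) = 1 := by
    intro s
    have := E' s i₀ j₀
    simpa [hrow₁, hrow₂, hrow₁', hrow₂'] using this.symm
  have hT₁ : ∀ s i, T₁' i (σ s) = T₁ i s := by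
    intro s i
    have := E' s i j₀
    simpa [hrow₂, hrow₂', hlam s] using this.symm
  have hT₂ : ∀ s j, T₂' j (σ s) = T₂ j s := by
    intro s j
    have := E' s i₀ j
    simpa [hrow₁, hrow₁', hlam s] using this.symm
  have hinj : Function.Injective σ := by
    intro s₁ s₂ h
    have : (fun i => T₁ i s₁) = (fun i => T₁ i s₂) := by
      funext i
      rw [← hT₁ s₁ i, ← hT₁ s₂ i, h]
    exact hrk₁.injective this
  have hbij : Function.Bijective σ := (Finite.injective_iff_bijective).mp hinj
  set e : Equiv.Perm (Fin J) := Equiv.ofBijective σ hbij with he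
  have he_apply : ∀ s, e s = σ s := fun s => rfl
  -- T₃ columns match
  have hT₃ : ∀ s k, T₃' k (σ s) = T₃ k s := by
    intro s k
    have hsum : ∀ i j, ∑ s', (T₃ k s' - T₃' k (σ s')) * (T₁ i s' * T₂ j s') = 0 := by
      intro i j
      have hre : ∑ r, T₁' i r * T₂' j r * T₃' k r
          = ∑ s', T₁ i s' * T₂ j s' * T₃' k (σ s') := by
        rw [← Equiv.sum_comp e (fun r => T₁' i r * T₂' j r * T₃' k r)]
        refine Finset.sum_congr rfl fun s' _ => ?_
        rw [he_apply, hT₁ s' i, hT₂ s' j]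
      have := htriple i j k
      rw [hre] at this
      have := sub_eq_zero.mpr this
      rw [← Finset.sum_sub_distrib] at this
      rw [← this]
      refine Finset.sum_congr rfl fun s' _ => ?_
      ring
    exact (sub_eq_zero.mp (khatriRao_li hrk₁ hrk₂
      (g := fun s' => T₃ k s' - T₃' k (σ s')) (fun i j => hsum i j) s)).symm
  -- assemble the permutation matrix
  refine ⟨Matrix.of fun i j => if e.symm j = i then (1:ℝ) else 0, ⟨e.symm, fun i j => rfl⟩, ?_, ?_, ?_⟩
  · funext i j
    have : (T₁ * Matrix.of fun i j => if e.symm j = i then (1:ℝ) else 0) i j = T₁ i (e.symm j) := by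
      simp [Matrix.mul_apply, mul_ite, Finset.sum_ite_eq]
    rw [this]
    have := hT₁ (e.symm j) i
    rwa [show σ (e.symm j) = j from e.apply_symm_apply j] at this
  · funext i j
    have : (T₂ * Matrix.of fun i j => if e.symm j = i then (1:ℝ) else 0) i j = T₂ i (e.symm j) := by
      simp [Matrix.mul_apply, mul_ite, Finset.sum_ite_eq]
    rw [this]
    have := hT₂ (e.symm j) i
    rwa [show σ (e.symm j) = j from e.apply_symm_apply j] at this
  · funext i j
    have : (T₃ * Matrix.of fun i j => if e.symm j = i then (1:ℝ) else 0) i j = T₃ i (e.symm j) := by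
      simp [Matrix.mul_apply, mul_ite, Finset.sum_ite_eq]
    rw [this]
    have := hT₃ (e.symm j) i
    rwa [show σ (e.symm j) = j from e.apply_symm_apply j] at this
end
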